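/- arXiv:1708.05859 — 3 statements merged into one kernel-verified Lean document; each statement's English description precedes it below -/
import Mathlib

section
/- Let f : C_n → ℝ, set D = D(f), L₁ = max{1, Lip(f)}, and L₂ = max{1, max_{x≠y∈C_n} ‖∇f(x) − ∇f(y)‖₁ / ‖x−y‖₁}, and let ν be the Gibbs distribution with Hamiltonian f. Let ε > 0 and let θ ∈ ℝ^n satisfy ‖θ‖₂ ≤ ε√n, ‖θ‖_∞ ≤ 1/4, and Tr(H(τ_θν)) ≤ 256 n^{1/3} D^{2/3} / ε^{2/3}. Let ξ_θ be the unique product measure on C_n whose center of mass lies at ∫_{C_n} tanh(∇f_{τ_θν}(y)) dτ_θν(y), and let Y ∼ ξ_θ. Then ‖tanh(∇f(E Y)) − E Y‖₁ ≤ 41 L₁ (112 L₂ n^{2/3} D^{1/3} / ε^{1/3} + ε n), where ∇f(E Y) is computed via the multilinear extension of ∇f and tanh is applied entrywise. -/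
open MeasureTheory

noncomputable section

namespace Paper

/-- The Boolean hypercube `{-1,1}^n` as a finite set of vectors in `ℝ^n`. -/
def cube (n : ℕ) : Finset (Fin n → ℝ) := Fintype.piFinset fun _ => ({-1, 1} : Finset ℝ)

/-- The ℓ¹ norm of a vector. -/
def onorm {n : ℕ} (v : Fin n → ℝ) : ℝ := ∑ i, |v i|

/-- The Euclidean (ℓ²) norm of a vector. -/
def tnorm {n : ℕ} (v : Fin n → ℝ) : ℝ := Real.sqrt (∑ i, (v i) ^ 2)

/-- Discrete derivative of `f` at coordinate `i`. -/
def dd {n : ℕ} (f : (Fin n → ℝ) → ℝ) (i : Fin n) (y : Fin n → ℝ) : ℝ :=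
  (f (Function.update y i 1) - f (Function.update y i (-1))) / 2

/-- Discrete gradient of `f`. -/
def dgrad {n : ℕ} (f : (Fin n → ℝ) → ℝ) (y : Fin n → ℝ) : Fin n → ℝ := fun i => dd f i y

/-- The multilinear (harmonic) extension of `f : C_n → ℝ` to `[-1,1]^n`. -/
def mlext {n : ℕ} (f : (Fin n → ℝ) → ℝ) (x : Fin n → ℝ) : ℝ :=
  ∑ S : Finset (Fin n),
    (((2 : ℝ) ^ n)⁻¹ * ∑ y ∈ cube n, f y * ∏ i ∈ S, y i) * ∏ i ∈ S, x i

/-- The multilinear extension of the discrete gradient of `f`. -/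
def mlgrad {n : ℕ} (f : (Fin n → ℝ) → ℝ) (x : Fin n → ℝ) : Fin n → ℝ :=
  fun i => mlext (dd f i) x

/-- The Lipschitz constant `Lip(f) = max_{i,y∈C_n} |∂_i f(y)|`. -/
def lip {n : ℕ} (f : (Fin n → ℝ) → ℝ) : ℝ :=
  sSup {a | ∃ i : Fin n, ∃ y ∈ cube n, a = |dd f i y|}

/-- The Lipschitz constant of the discrete gradient:
`max_{x ≠ y ∈ C_n} ‖∇f(x) - ∇f(y)‖₁ / ‖x - y‖₁`. -/
def gradLip {n : ℕ} (f : (Fin n → ℝ) → ℝ) : ℝ :=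
  sSup {a | ∃ x ∈ cube n, ∃ y ∈ cube n, x ≠ y ∧
    a = onorm (dgrad f x - dgrad f y) / onorm (x - y)}

/-- Gaussian width of a set `K ⊆ ℝ^n`. -/
def gaussianWidth {n : ℕ} (K : Set (Fin n → ℝ)) : ℝ :=
  ∫ θ, sSup ((fun v => ∑ i, v i * θ i) '' K)
    ∂(Measure.pi fun _ : Fin n => ProbabilityTheory.gaussianReal 0 1)

/-- Gradient complexity `D(f) = GW({∇f(y) : y ∈ C_n} ∪ {0})`. -/
def gradComplexity {n : ℕ} (f : (Fin n → ℝ) → ℝ) : ℝ :=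
  gaussianWidth ((dgrad f '' (cube n : Set (Fin n → ℝ))) ∪ {0})

/-- The Gibbs distribution with Hamiltonian `f`, as a weight function on `ℝ^n`
supported on the cube. -/
def gibbs {n : ℕ} (f : (Fin n → ℝ) → ℝ) (y : Fin n → ℝ) : ℝ :=
  if y ∈ cube n then Real.exp (f y) / ∑ z ∈ cube n, Real.exp (f z) else 0

/-- The tilt `τ_θ p` of a weight function `p` on the cube. -/
def tilt {n : ℕ} (p : (Fin n → ℝ) → ℝ) (θ : Fin n → ℝ) (y : Fin n → ℝ) : ℝ :=
  p y * Real.exp (∑ i, θ i * y i) / ∑ z ∈ cube n, p z * Real.exp (∑ i, θ i * z i)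

/-- The mean (center of mass) of the tilted measure `τ_θ p`. -/
def tiltMean {n : ℕ} (p : (Fin n → ℝ) → ℝ) (θ : Fin n → ℝ) : Fin n → ℝ :=
  fun i => ∑ y ∈ cube n, tilt p θ y * y i

/-- A weight function on the cube is a product measure: the coordinates are
independent Bernoulli-type variables. -/
def IsProduct {n : ℕ} (ξ : (Fin n → ℝ) → ℝ) : Prop :=
  (∀ y, y ∉ cube n → ξ y = 0) ∧
  ∃ q : Fin n → ℝ, (∀ i, q i ∈ Set.Icc (0 : ℝ) 1) ∧
    ∀ y ∈ cube n, ξ y = ∏ i, (if y i = 1 then q i else 1 - q i)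

/-- The Wasserstein (transportation) distance between two weight functions on the cube. -/
def W1 {n : ℕ} (p q : (Fin n → ℝ) → ℝ) : ℝ :=
  sInf {w | ∃ π : (Fin n → ℝ) × (Fin n → ℝ) → ℝ,
    (∀ a, 0 ≤ π a) ∧
    (∀ x, ∑ y ∈ cube n, π (x, y) = p x) ∧
    (∀ y, ∑ x ∈ cube n, π (x, y) = q y) ∧
    w = (1 / 2) * ∑ x ∈ cube n, ∑ y ∈ cube n, π (x, y) * onorm (x - y)}

/-- `p` (the law of a random vector on the cube) is a `(ρ,δ,ε)`-tilt-mixture. -/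
def IsTiltMixture {n : ℕ} (p : (Fin n → ℝ) → ℝ) (ρ : Measure (Fin n → ℝ))
    (δ ε : ℝ) : Prop :=
  ∃ m : Measure (Fin n → ℝ), IsProbabilityMeasure m ∧
    m {θ | ¬ (tnorm θ ≤ ε * Real.sqrt n ∧ ∀ i, |θ i| ≤ 1 / 4)} = 0 ∧
    (∀ φ : (Fin n → ℝ) → ℝ,
      ∑ y ∈ cube n, φ y * p y = ∫ θ, ∑ y ∈ cube n, φ y * tilt p θ y ∂m) ∧
    ENNReal.ofReal (1 - δ) <
      m {θ | ∃ ξ, IsProduct ξ ∧ W1 (tilt p θ) ξ ≤ δ * n} ∧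
    ρ = m.map (tiltMean p)

/-- The product weight on the cube with mean vector `z ∈ [-1,1]^n`:
the law of `X(z)`. -/
def prodW {n : ℕ} (z : Fin n → ℝ) (y : Fin n → ℝ) : ℝ := ∏ i, (1 + y i * z i) / 2

/-- `q` (the law of a random vector `X` on the cube) is a `(ρ,δ)`-mixture:
there is a coupling of `X(ρ)` and `X` with `E‖X(ρ) - X‖₁ ≤ δ n`. -/
def IsMixture {n : ℕ} (q : (Fin n → ℝ) → ℝ) (ρ : Measure (Fin n → ℝ)) (δ : ℝ) : Prop :=
  ∃ π : (Fin n → ℝ) × (Fin n → ℝ) → ℝ,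
    (∀ a, 0 ≤ π a) ∧
    (∀ x ∈ cube n, ∑ y ∈ cube n, π (x, y) = ∫ z, prodW z x ∂ρ) ∧
    (∀ y, ∑ x ∈ cube n, π (x, y) = q y) ∧
    ∑ x ∈ cube n, ∑ y ∈ cube n, π (x, y) * onorm (x - y) ≤ δ * n

/-- `f_ν = log(dν/dμ)` for a weight function `p` on the cube (`μ` uniform). -/
def hamOf {n : ℕ} (p : (Fin n → ℝ) → ℝ) : (Fin n → ℝ) → ℝ :=
  fun y => Real.log ((2 : ℝ) ^ n * p y)

/-- `Tr(H(ν))` for a weight function `p` on the cube. -/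
def traceH {n : ℕ} (p : (Fin n → ℝ) → ℝ) : ℝ :=
  ∑ i, ((∑ y ∈ cube n, p y * (Real.tanh (dd (hamOf p) i y)) ^ 2) -
    (∑ y ∈ cube n, p y * Real.tanh (dd (hamOf p) i y)) ^ 2)

/-!
Write `p = τ_θ ν`, `f_p = log (2ⁿ p)` and `m = ∫ tanh (∇f_p) dp`; on the cube `∇f_p = ∇f + θ`.
For each coordinate, `tanh (∂ᵢf(m)) - mᵢ` is split into three errors.

* `∂ᵢf(m) - E_p ∂ᵢf`: move the coordinates of `y ∼ p` to those of `m` one at a time. The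
  multilinear extension is affine in each coordinate, and discrete integration by parts,
  `E_p[y_j h] = E_p[tanh (∂_j f_p) h]` for `h` independent of `y_j`, turns the `j`-th move into
  `E_p |tanh (∂_j f_p) - m_j|` times an `ℓ¹`-row of the discrete Hessian, which is at most `L₂`.
* `θᵢ`, of total `ℓ¹` norm at most `√n ‖θ‖₂ ≤ ε n`.
* The Jensen gap `tanh (E Z) - E tanh Z` for `Z = ∂ᵢf_p`, `|Z| ≤ B = Lip f + 1/4`: by concavity
  of `tanh` on `[0, ∞)` it is at most `(2B + 2) E |tanh Z - E tanh Z|`.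

By Cauchy–Schwarz, `∑_j E_p |tanh (∂_j f_p) - m_j| ≤ √(n Tr H(p))`, which the hypothesis on
`Tr H` bounds by `16 n^{2/3} D^{1/3} / ε^{1/3}`.
-/

open Real

lemma hasDerivAt_tanh (x : ℝ) : HasDerivAt tanh (1 - tanh x ^ 2) x := by
  have h := (hasDerivAt_sinh x).div (hasDerivAt_cosh x) (cosh_pos x).ne'
  rw [show sinh / cosh = tanh from funext fun y => (tanh_eq_sinh_div_cosh y).symm] at h
  refine h.congr_deriv ?_
  rw [tanh_eq_sinh_div_cosh]
  field_simp

lemma tanh_le_tanh_iff {a b : ℝ} : tanh a ≤ tanh b ↔ a ≤ b := by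
  have mem : ∀ x, tanh x ∈ Set.Ioo (-1) 1 := fun x => ⟨neg_one_lt_tanh x, tanh_lt_one x⟩
  rw [← artanh_le_artanh_iff (mem a) (mem b), artanh_tanh, artanh_tanh]

lemma tanh_nonneg {x : ℝ} (hx : 0 ≤ x) : 0 ≤ tanh x := by
  simpa using tanh_le_tanh_iff.2 hx

lemma exists_tanh_sub_tanh_eq {x z : ℝ} (h : x < z) :
    ∃ c, x < c ∧ c < z ∧ tanh z - tanh x = (1 - tanh c ^ 2) * (z - x) := by
  obtain ⟨c, ⟨hxc, hcz⟩, hc⟩ := exists_hasDerivAt_eq_slope tanh (fun c => 1 - tanh c ^ 2) h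
    (fun c _ => (hasDerivAt_tanh c).continuousAt.continuousWithinAt)
    (fun c _ => hasDerivAt_tanh c)
  exact ⟨c, hxc, hcz, by rw [hc, div_mul_cancel₀ _ (sub_ne_zero.2 h.ne')]⟩

lemma abs_tanh_sub_tanh_le (u v : ℝ) : |tanh u - tanh v| ≤ |u - v| := by
  wlog h : v < u generalizing u v
  · rcases (not_lt.1 h).eq_or_lt with rfl | h'
    · simp
    · rw [abs_sub_comm, abs_sub_comm u]; exact this v u h'
  obtain ⟨c, -, -, hc⟩ := exists_tanh_sub_tanh_eq h
  rw [hc, abs_mul, abs_of_pos (sub_pos.2 h)]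
  have := tanh_sq_lt_one c
  rw [abs_of_nonneg (by linarith)]
  nlinarith [sq_nonneg (tanh c)]

lemma tanh_le_tangent {M z : ℝ} (hM : 0 ≤ M) (hz : 0 ≤ z) :
    tanh z ≤ tanh M + (1 - tanh M ^ 2) * (z - M) := by
  rcases lt_trichotomy M z with h | rfl | h
  · obtain ⟨c, hMc, -, hc⟩ := exists_tanh_sub_tanh_eq h
    have : tanh M ^ 2 ≤ tanh c ^ 2 :=
      pow_le_pow_left₀ (tanh_nonneg hM) (tanh_le_tanh_iff.2 hMc.le) 2
    nlinarith
  · simp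
  · obtain ⟨c, hzc, hcM, hc⟩ := exists_tanh_sub_tanh_eq h
    have : tanh c ^ 2 ≤ tanh M ^ 2 :=
      pow_le_pow_left₀ (tanh_nonneg (hz.trans hzc.le)) (tanh_le_tanh_iff.2 hcM.le) 2
    nlinarith

lemma le_one_add_mul_tanh {u : ℝ} (hu : 0 ≤ u) : u ≤ (1 + u) * tanh u := by
  have h := tanh_le_tangent hu (le_refl 0)
  have h1 := tanh_lt_one u
  have h0 := tanh_nonneg hu
  rw [tanh_zero] at h
  nlinarith [mul_nonneg hu h0, mul_nonneg (mul_nonneg hu h0) (sub_nonneg.2 h1.le)]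

section TanhJensenGap

variable {α : Type*} {s : Finset α} {q : α → ℝ}

lemma sum_mul_le_sum_mul (hq0 : ∀ y ∈ s, 0 ≤ q y) {a b : α → ℝ} (h : ∀ y ∈ s, a y ≤ b y) :
    ∑ y ∈ s, q y * a y ≤ ∑ y ∈ s, q y * b y :=
  Finset.sum_le_sum fun y hy => mul_le_mul_of_nonneg_left (h y hy) (hq0 y hy)

lemma sum_mul_add_mul_sub (hq1 : ∑ y ∈ s, q y = 1) (a b c : ℝ) (g : α → ℝ) :
    ∑ y ∈ s, q y * (b + a * (g y - c)) = b + a * (∑ y ∈ s, q y * g y - c) := by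
  calc ∑ y ∈ s, q y * (b + a * (g y - c)) = ∑ y ∈ s, ((b - a * c) * q y + a * (q y * g y)) :=
        Finset.sum_congr rfl fun y _ => by ring
    _ = _ := by rw [Finset.sum_add_distrib, ← Finset.mul_sum, ← Finset.mul_sum, hq1]; ring

lemma sum_mul_tanh_le_tanh (hq0 : ∀ y ∈ s, 0 ≤ q y) (hq1 : ∑ y ∈ s, q y = 1) {Z : α → ℝ}
    {B : ℝ} (hZ : ∀ y ∈ s, Z y ≤ B) : ∑ y ∈ s, q y * tanh (Z y) ≤ tanh B := by
  calc ∑ y ∈ s, q y * tanh (Z y) ≤ ∑ y ∈ s, q y * tanh B :=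
        sum_mul_le_sum_mul hq0 fun y hy => tanh_le_tanh_iff.2 (hZ y hy)
    _ = tanh B := by rw [← Finset.sum_mul, hq1, one_mul]

lemma tanh_sum_mul_sub_sum_mul_tanh_le (hq0 : ∀ y ∈ s, 0 ≤ q y) (hq1 : ∑ y ∈ s, q y = 1)
    {Z : α → ℝ} {B : ℝ} (hZ : ∀ y ∈ s, |Z y| ≤ B) (ht : 0 ≤ ∑ y ∈ s, q y * tanh (Z y)) :
    tanh (∑ y ∈ s, q y * Z y) - ∑ y ∈ s, q y * tanh (Z y) ≤
      (2 * B + 2) * ∑ y ∈ s, q y * |tanh (Z y) - ∑ x ∈ s, q x * tanh (Z x)| := by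
  set t := ∑ y ∈ s, q y * tanh (Z y)
  have htB : t ≤ tanh B := sum_mul_tanh_le_tanh hq0 hq1 fun y hy => (le_abs_self _).trans (hZ y hy)
  have ht1 : t < 1 := htB.trans_lt (tanh_lt_one B)
  set x := artanh t
  have hx : tanh x = t := tanh_artanh ⟨by linarith, ht1⟩
  have hx0 : 0 ≤ x := artanh_nonneg ht
  have hxB : x ≤ B := tanh_le_tanh_iff.1 (hx ▸ htB)
  have hpt : ∀ y ∈ s, (1 - t ^ 2) * (Z y - x) ≤ (2 * B + 2) * |tanh (Z y) - t| := by
    intro y hy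
    have hZB := (le_abs_self _).trans (hZ y hy)
    rcases le_or_gt (Z y) x with hZx | hxZ
    · nlinarith [abs_nonneg (tanh (Z y) - t), (abs_nonneg _).trans (hZ y hy),
        mul_nonpos_of_nonneg_of_nonpos (show 0 ≤ 1 - t ^ 2 by nlinarith) (sub_nonpos.2 hZx)]
    · have hTt : t ≤ tanh (Z y) := hx ▸ tanh_le_tanh_iff.2 hxZ.le
      have hT1 := tanh_lt_one (Z y)
      have hslope := tanh_le_tangent (hx0.trans hxZ.le) hx0
      rw [hx] at hslope
      rw [abs_of_nonneg (sub_nonneg.2 hTt)]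
      have hT0 := tanh_nonneg (hx0.trans hxZ.le)
      nlinarith [mul_le_mul_of_nonneg_left (show Z y - x ≤ B by linarith) (sub_nonneg.2 hTt),
        mul_nonneg (sq_nonneg (1 - t)) (sub_nonneg.2 hxZ.le),
        mul_nonneg (mul_nonneg hT0 (sub_nonneg.2 hT1.le)) (sub_nonneg.2 hxZ.le)]
  have havg := sum_mul_le_sum_mul hq0 fun y hy => (zero_add _).trans_le (hpt y hy)
  rw [sum_mul_add_mul_sub hq1, zero_add] at havg
  simp only [mul_left_comm _ (2 * B + 2), ← Finset.mul_sum] at havg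
  rcases le_or_gt (∑ y ∈ s, q y * Z y) x with hmx | hxm
  · have := tanh_le_tanh_iff.2 hmx
    have hW := Finset.sum_nonneg fun y hy => mul_nonneg (hq0 y hy) (abs_nonneg (tanh (Z y) - t))
    have hB : 0 ≤ B := hx0.trans hxB
    nlinarith
  · have := tanh_le_tangent hx0 (hx0.trans hxm.le)
    rw [hx] at this
    linarith

lemma sum_mul_tanh_sub_tanh_sum_mul_le (hq0 : ∀ y ∈ s, 0 ≤ q y) (hq1 : ∑ y ∈ s, q y = 1)
    {Z : α → ℝ} {B : ℝ} (hZ : ∀ y ∈ s, |Z y| ≤ B) (ht : 0 ≤ ∑ y ∈ s, q y * tanh (Z y)) :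
    ∑ y ∈ s, q y * tanh (Z y) - tanh (∑ y ∈ s, q y * Z y) ≤
      (B + 1) * ∑ y ∈ s, q y * |tanh (Z y) - ∑ x ∈ s, q x * tanh (Z x)| := by
  set t := ∑ y ∈ s, q y * tanh (Z y)
  set m := ∑ y ∈ s, q y * Z y
  -- pass through the mean of the positive parts, where `tanh` is concave
  set M := ∑ y ∈ s, q y * max (Z y) 0
  have hM0 : 0 ≤ M := Finset.sum_nonneg fun y hy => mul_nonneg (hq0 y hy) (le_max_right _ _)
  have hmM : m ≤ M := sum_mul_le_sum_mul hq0 fun y _ => le_max_left _ _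
  have htM : t ≤ tanh M :=
    calc t ≤ ∑ y ∈ s, q y * (tanh M + (1 - tanh M ^ 2) * (max (Z y) 0 - M)) :=
          sum_mul_le_sum_mul hq0 fun y _ =>
            (tanh_le_tanh_iff.2 (le_max_left (Z y) 0)).trans
              (tanh_le_tangent hM0 (le_max_right (Z y) 0))
      _ = tanh M := by rw [sum_mul_add_mul_sub hq1]; ring
  have hMm : tanh M - tanh m ≤ M - m := by
    simpa [abs_of_nonneg (sub_nonneg.2 hmM)] using (le_abs_self _).trans (abs_tanh_sub_tanh_le M m)
  have hpt : ∀ y ∈ s, max (Z y) 0 - Z y ≤ (B + 1) * |tanh (Z y) - t| := by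
    intro y hy
    rcases le_or_gt 0 (Z y) with hZ0 | hZ0
    · rw [max_eq_left hZ0]; nlinarith [abs_nonneg (tanh (Z y) - t), (abs_nonneg _).trans (hZ y hy)]
    · rw [max_eq_right hZ0.le]
      have h1 := le_one_add_mul_tanh (neg_nonneg.2 hZ0.le)
      have h2 : -Z y ≤ B := (neg_le_abs _).trans (hZ y hy)
      have h3 := tanh_nonneg (neg_nonneg.2 hZ0.le)
      rw [tanh_neg] at h1 h3
      have h4 := le_abs_self (t - tanh (Z y))
      rw [abs_sub_comm] at h4
      nlinarith
  have havg := sum_mul_le_sum_mul hq0 hpt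
  simp only [mul_sub, Finset.sum_sub_distrib, mul_left_comm _ (B + 1), ← Finset.mul_sum] at havg
  linarith

lemma abs_tanh_sum_mul_sub_sum_mul_tanh_le (hq0 : ∀ y ∈ s, 0 ≤ q y) (hq1 : ∑ y ∈ s, q y = 1)
    {Z : α → ℝ} {B : ℝ} (hZ : ∀ y ∈ s, |Z y| ≤ B) :
    |tanh (∑ y ∈ s, q y * Z y) - ∑ y ∈ s, q y * tanh (Z y)| ≤
      (2 * B + 2) * ∑ y ∈ s, q y * |tanh (Z y) - ∑ x ∈ s, q x * tanh (Z x)| := by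
  wlog ht : 0 ≤ ∑ y ∈ s, q y * tanh (Z y) generalizing Z
  · have := this (Z := fun y => -Z y) (by simpa using hZ) (by simp [tanh_neg]; linarith)
    simpa only [tanh_neg, mul_neg, Finset.sum_neg_distrib, neg_sub_neg, abs_sub_comm] using this
  have hB : 0 ≤ B := by
    obtain ⟨y, hy⟩ := Finset.nonempty_of_sum_ne_zero (hq1 ▸ one_ne_zero)
    exact (abs_nonneg _).trans (hZ y hy)
  have hW := Finset.sum_nonneg fun y hy =>
    mul_nonneg (hq0 y hy) (abs_nonneg (tanh (Z y) - ∑ x ∈ s, q x * tanh (Z x)))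
  rw [abs_le]
  constructor
  · nlinarith [sum_mul_tanh_sub_tanh_sum_mul_le hq0 hq1 hZ ht]
  · exact tanh_sum_mul_sub_sum_mul_tanh_le hq0 hq1 hZ ht

end TanhJensenGap

section Cube

variable {n : ℕ}

lemma mem_cube {y : Fin n → ℝ} : y ∈ cube n ↔ ∀ i, y i = -1 ∨ y i = 1 := by
  simp [cube, Fintype.mem_piFinset, or_comm]

lemma cube_nonempty : (cube n).Nonempty :=
  ⟨fun _ => 1, mem_cube.2 fun _ => Or.inr rfl⟩

lemma update_mem_cube {y : Fin n → ℝ} (hy : y ∈ cube n) (i : Fin n) {s : ℝ}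
    (hs : s = -1 ∨ s = 1) : Function.update y i s ∈ cube n := by
  rw [mem_cube] at *
  intro k
  rcases eq_or_ne k i with rfl | hk
  · simpa using hs
  · simpa [hk] using hy k

lemma update_neg_mem_cube {y : Fin n → ℝ} (hy : y ∈ cube n) (i : Fin n) :
    Function.update y i (-y i) ∈ cube n :=
  update_mem_cube hy i <| by rcases mem_cube.1 hy i with h | h <;> simp [h]

lemma abs_of_mem_cube {y : Fin n → ℝ} (hy : y ∈ cube n) (i : Fin n) : |y i| = 1 := by
  rcases mem_cube.1 hy i with h | h <;> simp [h]

lemma dd_update_self (F : (Fin n → ℝ) → ℝ) (j : Fin n) (z : Fin n → ℝ) (s : ℝ) :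
    dd F j (Function.update z j s) = dd F j z := by
  simp only [dd, Function.update_idem]

/-- Reflecting the `j`-th coordinate is a sign-reversing involution of the cube. -/
lemma sum_coord_mul_eq_zero {G : (Fin n → ℝ) → ℝ} (j : Fin n)
    (hG : ∀ y ∈ cube n, G (Function.update y j (-y j)) = G y) :
    ∑ y ∈ cube n, y j * G y = 0 := by
  have h : ∑ y ∈ cube n, y j * G y = ∑ y ∈ cube n, -(y j * G y) := by
    refine Finset.sum_nbij' (fun y => Function.update y j (-y j))
      (fun y => Function.update y j (-y j)) (fun y hy => update_neg_mem_cube hy j)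
      (fun y hy => update_neg_mem_cube hy j) (fun y _ => by simp) (fun y _ => by simp)
      fun y hy => ?_
    rw [hG y hy, Function.update_self]
    ring
  rw [Finset.sum_neg_distrib] at h
  linarith

end Cube

section PositiveWeight

variable {n : ℕ} {p : (Fin n → ℝ) → ℝ}

lemma tanh_half_log_sub_log {u v : ℝ} (hu : 0 < u) (hv : 0 < v) :
    tanh ((log u - log v) / 2) = (u - v) / (u + v) := by
  set w := (log u - log v) / 2
  have hsq : exp w * exp w * v = u := by
    rw [← exp_add, show w + w = log u - log v by ring, exp_sub, exp_log hu, exp_log hv,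
      div_mul_cancel₀ _ hv.ne']
  have hw := exp_pos w
  rw [tanh_eq, exp_neg]
  field_simp
  linear_combination 2 * hsq

lemma tanh_dd_hamOf (hp : ∀ y ∈ cube n, 0 < p y) {y : Fin n → ℝ} (hy : y ∈ cube n)
    (j : Fin n) :
    tanh (dd (hamOf p) j y) =
      (p (Function.update y j 1) - p (Function.update y j (-1))) /
        (p (Function.update y j 1) + p (Function.update y j (-1))) := by
  have h1 := hp _ (update_mem_cube hy j (Or.inr rfl))
  have h2 := hp _ (update_mem_cube hy j (Or.inl rfl))
  simp only [dd, hamOf]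
  rw [log_mul (by positivity) h1.ne', log_mul (by positivity) h2.ne', add_sub_add_left_eq_sub,
    tanh_half_log_sub_log h1 h2]

/-- The discrete analogue of Gaussian integration by parts. -/
lemma sum_mul_coord_mul_eq (hp : ∀ y ∈ cube n, 0 < p y) (j : Fin n) {h : (Fin n → ℝ) → ℝ}
    (hh : ∀ y ∈ cube n, h (Function.update y j (-y j)) = h y) :
    ∑ y ∈ cube n, p y * y j * h y = ∑ y ∈ cube n, p y * tanh (dd (hamOf p) j y) * h y := by
  let G y := 2 * p (Function.update y j 1) * p (Function.update y j (-1)) /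
    (p (Function.update y j 1) + p (Function.update y j (-1))) * h y
  have hsym : ∀ y ∈ cube n, p y * (y j - tanh (dd (hamOf p) j y)) * h y = y j * G y := by
    intro y hy
    have ha := hp _ (update_mem_cube hy j (Or.inr rfl))
    have hb := hp _ (update_mem_cube hy j (Or.inl rfl))
    rw [tanh_dd_hamOf hp hy]
    simp only [G]
    rcases mem_cube.1 hy j with hj | hj
    · rw [← hj, Function.update_eq_self] at hb ⊢
      rw [hj]
      field_simp
      ring
    · rw [← hj, Function.update_eq_self] at ha ⊢
      rw [hj]
      field_simp
      ring
  have hzero := sum_coord_mul_eq_zero (G := G) j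
    fun y hy => by simp only [G, Function.update_idem, hh y hy]
  rw [← Finset.sum_congr rfl hsym] at hzero
  simpa only [mul_sub, sub_mul, Finset.sum_sub_distrib, sub_eq_zero] using hzero

end PositiveWeight

section TiltedGibbs

variable {n : ℕ} (f : (Fin n → ℝ) → ℝ) (θ : Fin n → ℝ)

lemma sum_exp_pos : 0 < ∑ z ∈ cube n, exp (f z) :=
  Finset.sum_pos (fun _ _ => exp_pos _) cube_nonempty

lemma gibbs_pos {y : Fin n → ℝ} (hy : y ∈ cube n) : 0 < gibbs f y := by
  rw [gibbs, if_pos hy]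
  exact div_pos (exp_pos _) (sum_exp_pos f)

lemma sum_gibbs_mul_exp_pos : 0 < ∑ z ∈ cube n, gibbs f z * exp (∑ i, θ i * z i) :=
  Finset.sum_pos (fun _ hz => mul_pos (gibbs_pos f hz) (exp_pos _)) cube_nonempty

lemma tilt_gibbs_pos {y : Fin n → ℝ} (hy : y ∈ cube n) : 0 < tilt (gibbs f) θ y :=
  div_pos (mul_pos (gibbs_pos f hy) (exp_pos _)) (sum_gibbs_mul_exp_pos f θ)

lemma sum_tilt_gibbs : ∑ y ∈ cube n, tilt (gibbs f) θ y = 1 := by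
  simp only [tilt, ← Finset.sum_div]
  exact div_self (sum_gibbs_mul_exp_pos f θ).ne'

lemma hamOf_tilt_gibbs :
    ∃ c, ∀ y ∈ cube n, hamOf (tilt (gibbs f) θ) y = f y + ∑ k, θ k * y k + c := by
  have hZ := sum_exp_pos f
  have hZθ := sum_gibbs_mul_exp_pos f θ
  refine ⟨log (2 ^ n / ((∑ z ∈ cube n, exp (f z)) *
    ∑ z ∈ cube n, gibbs f z * exp (∑ i, θ i * z i))), fun y hy => ?_⟩
  have : 2 ^ n * tilt (gibbs f) θ y = 2 ^ n / ((∑ z ∈ cube n, exp (f z)) *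
      ∑ z ∈ cube n, gibbs f z * exp (∑ i, θ i * z i)) * exp (f y + ∑ k, θ k * y k) := by
    rw [tilt, gibbs, if_pos hy, exp_add]
    field_simp
  rw [hamOf, this, log_mul (by positivity) (exp_pos _).ne', log_exp]
  ring

lemma sum_mul_update_sub_sum_mul_update (y : Fin n → ℝ) (i : Fin n) (a b : ℝ) :
    ∑ k, θ k * Function.update y i a k - ∑ k, θ k * Function.update y i b k = θ i * (a - b) := by
  rw [← Finset.sum_sub_distrib, Finset.sum_eq_single i (fun k _ hk => by simp [hk]) (by simp)]
  simp [mul_sub]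

lemma dd_hamOf_tilt_gibbs {y : Fin n → ℝ} (hy : y ∈ cube n) (i : Fin n) :
    dd (hamOf (tilt (gibbs f) θ)) i y = dd f i y + θ i := by
  obtain ⟨c, hc⟩ := hamOf_tilt_gibbs f θ
  have := sum_mul_update_sub_sum_mul_update θ y i 1 (-1)
  rw [dd, dd, hc _ (update_mem_cube hy i (Or.inr rfl)), hc _ (update_mem_cube hy i (Or.inl rfl))]
  linarith

end TiltedGibbs

section Multiaffine

variable {n : ℕ}

def IsMultiaffine (F : (Fin n → ℝ) → ℝ) : Prop :=
  ∀ z k t, F (Function.update z k t) =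
    (1 + t) / 2 * F (Function.update z k 1) + (1 - t) / 2 * F (Function.update z k (-1))

lemma IsMultiaffine.update_sub_update {F : (Fin n → ℝ) → ℝ} (hF : IsMultiaffine F)
    (z : Fin n → ℝ) (k : Fin n) (a b : ℝ) :
    F (Function.update z k a) - F (Function.update z k b) = (a - b) * dd F k z := by
  rw [hF z k a, hF z k b, dd]
  ring

lemma IsMultiaffine.dd {F : (Fin n → ℝ) → ℝ} (hF : IsMultiaffine F) (j : Fin n) :
    IsMultiaffine (dd F j) := by
  intro z k t
  rcases eq_or_ne k j with rfl | hkj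
  · simp only [dd_update_self]
    ring
  · simp only [Paper.dd, Function.update_comm hkj _ _ z, hF _ k t]
    ring

lemma mlext_eq_sum_mul_prod (g : (Fin n → ℝ) → ℝ) (x : Fin n → ℝ) :
    mlext g x = ∑ y ∈ cube n, g y * ((2 ^ n)⁻¹ * ∏ k, (1 + y k * x k)) := by
  simp only [mlext, Finset.sum_mul, Finset.mul_sum]
  rw [Finset.sum_comm]
  refine Finset.sum_congr rfl fun y _ => ?_
  rw [Finset.prod_one_add, Finset.powerset_univ, Finset.mul_sum, Finset.mul_sum]
  refine Finset.sum_congr rfl fun S _ => ?_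
  rw [Finset.prod_mul_distrib]
  ring

lemma prod_one_add_mul_of_mem_cube {x y : Fin n → ℝ} (hx : x ∈ cube n) (hy : y ∈ cube n) :
    ∏ k, (1 + y k * x k) = if y = x then 2 ^ n else 0 := by
  split_ifs with h
  · subst h
    rw [Finset.prod_congr rfl fun k _ => show 1 + y k * y k = 2 by
      rcases mem_cube.1 hy k with h | h <;> rw [h] <;> norm_num]
    simp
  · obtain ⟨k, hk⟩ := Function.ne_iff.1 h
    refine Finset.prod_eq_zero (Finset.mem_univ k) ?_
    rcases mem_cube.1 hx k with h1 | h1 <;> rcases mem_cube.1 hy k with h2 | h2 <;>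
      simp_all

lemma mlext_of_mem_cube (g : (Fin n → ℝ) → ℝ) {x : Fin n → ℝ} (hx : x ∈ cube n) :
    mlext g x = g x := by
  rw [mlext_eq_sum_mul_prod]
  rw [Finset.sum_congr rfl fun y hy => by rw [prod_one_add_mul_of_mem_cube hx hy]]
  simp [hx]

lemma isMultiaffine_mlext (g : (Fin n → ℝ) → ℝ) : IsMultiaffine (mlext g) := by
  intro z k t
  simp only [mlext_eq_sum_mul_prod, Finset.mul_sum, ← Finset.sum_add_distrib]
  refine Finset.sum_congr rfl fun y _ => ?_
  have h : ∀ s, ∏ i ∈ {k}ᶜ, (1 + y i * Function.update z k s i) = ∏ i ∈ {k}ᶜ, (1 + y i * z i) :=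
    fun s => Finset.prod_congr rfl fun i hi =>
      by rw [Function.update_of_ne (Finset.mem_compl.1 hi ∘ Finset.mem_singleton.2)]
  simp only [Fintype.prod_eq_mul_prod_compl k, Function.update_self, h]
  ring

lemma dd_mlext_of_mem_cube (g : (Fin n → ℝ) → ℝ) (j : Fin n) {y : Fin n → ℝ} (hy : y ∈ cube n) :
    dd (mlext g) j y = dd g j y := by
  rw [dd, dd, mlext_of_mem_cube g (update_mem_cube hy j (Or.inr rfl)),
    mlext_of_mem_cube g (update_mem_cube hy j (Or.inl rfl))]

/-- Each point of the box is a convex combination of two points with one more coordinate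
in `{-1, 1}`. -/
lemma IsMultiaffine.sum_abs_le {ι : Type*} [Fintype ι] {F : ι → (Fin n → ℝ) → ℝ}
    (hF : ∀ i, IsMultiaffine (F i)) {K : ℝ} (hK : ∀ y ∈ cube n, ∑ i, |F i y| ≤ K)
    {z : Fin n → ℝ} (hz : ∀ k, |z k| ≤ 1) : ∑ i, |F i z| ≤ K := by
  suffices ∀ A : Finset (Fin n), ∀ z : Fin n → ℝ, (∀ k, |z k| ≤ 1) →
      (∀ k ∉ A, z k = -1 ∨ z k = 1) → ∑ i, |F i z| ≤ K from
    this Finset.univ z hz (by simp)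
  intro A
  induction A using Finset.induction_on with
  | empty => exact fun z _ hz => hK z (mem_cube.2 fun k => hz k (Finset.notMem_empty k))
  | @insert k A _ ih =>
    intro z hz hcube
    have hup : ∀ s : ℝ, (s = -1 ∨ s = 1) → ∑ i, |F i (Function.update z k s)| ≤ K := by
      intro s hs
      refine ih _ (fun l => ?_) (fun l hl => ?_)
      · rcases eq_or_ne l k with rfl | hlk
        · rcases hs with rfl | rfl <;> simp
        · simpa [hlk] using hz l
      · rcases eq_or_ne l k with rfl | hlk
        · simpa using hs
        · simpa [hlk] using hcube l (by simp [hlk, hl])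
    obtain ⟨hk1, hk2⟩ := abs_le.1 (hz k)
    calc ∑ i, |F i z|
        = ∑ i, |(1 + z k) / 2 * F i (Function.update z k 1) +
            (1 - z k) / 2 * F i (Function.update z k (-1))| := by
          simp only [← hF _ z k (z k), Function.update_eq_self]
      _ ≤ ∑ i, ((1 + z k) / 2 * |F i (Function.update z k 1)| +
            (1 - z k) / 2 * |F i (Function.update z k (-1))|) := by
          refine Finset.sum_le_sum fun i _ => (abs_add_le _ _).trans_eq ?_
          rw [abs_mul, abs_mul, abs_of_nonneg (a := (1 + z k) / 2) (by linarith),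
            abs_of_nonneg (a := (1 - z k) / 2) (by linarith)]
      _ ≤ (1 + z k) / 2 * K + (1 - z k) / 2 * K := by
          rw [Finset.sum_add_distrib, ← Finset.mul_sum, ← Finset.mul_sum]
          exact add_le_add (mul_le_mul_of_nonneg_left (hup 1 (Or.inr rfl)) (by linarith))
            (mul_le_mul_of_nonneg_left (hup (-1) (Or.inl rfl)) (by linarith))
      _ = K := by ring

end Multiaffine

section Interpolation

variable {n : ℕ} {p : (Fin n → ℝ) → ℝ}

lemma sum_mul_mlext_piecewise_insert_sub (hp : ∀ y ∈ cube n, 0 < p y) (g : (Fin n → ℝ) → ℝ)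
    (m : Fin n → ℝ) {A : Finset (Fin n)} {j : Fin n} (hj : j ∉ A) :
    ∑ y ∈ cube n, p y * mlext g ((insert j A).piecewise m y) -
        ∑ y ∈ cube n, p y * mlext g (A.piecewise m y) =
      ∑ y ∈ cube n, p y * ((m j - tanh (dd (hamOf p) j y)) * dd (mlext g) j (A.piecewise m y)) := by
  have hstep : ∀ y, mlext g ((insert j A).piecewise m y) - mlext g (A.piecewise m y) =
      (m j - y j) * dd (mlext g) j (A.piecewise m y) := by
    intro y
    have hself : Function.update (A.piecewise m y) j (y j) = A.piecewise m y := by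
      rw [Function.update_eq_self_iff, Finset.piecewise_eq_of_notMem _ _ _ hj]
    rw [Finset.piecewise_insert, ← (isMultiaffine_mlext g).update_sub_update _ j, hself]
  have hibp := sum_mul_coord_mul_eq hp j (h := fun y => dd (mlext g) j (A.piecewise m y))
    fun y _ => by rw [← Finset.update_piecewise_of_notMem _ _ _ hj, dd_update_self]
  simp only [← Finset.sum_sub_distrib, ← mul_sub, hstep]
  simp only [sub_mul, mul_sub, Finset.sum_sub_distrib, ← mul_assoc]
  rw [hibp]

lemma sum_abs_mlext_sub_sum_mul_le {ι : Type*} [Fintype ι] (hp : ∀ y ∈ cube n, 0 < p y)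
    (hp1 : ∑ y ∈ cube n, p y = 1) {g : ι → (Fin n → ℝ) → ℝ} {K : ℝ}
    (hK : ∀ j z, (∀ k, |z k| ≤ 1) → ∑ i, |dd (mlext (g i)) j z| ≤ K)
    {m : Fin n → ℝ} (hm : ∀ k, |m k| ≤ 1) :
    ∑ i, |mlext (g i) m - ∑ y ∈ cube n, p y * g i y| ≤
      K * ∑ j, ∑ y ∈ cube n, p y * |tanh (dd (hamOf p) j y) - m j| := by
  have hbox : ∀ (A : Finset (Fin n)) y, y ∈ cube n → ∀ k, |A.piecewise m y k| ≤ 1 :=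
    fun A y hy k => by
      by_cases hk : k ∈ A <;> simp [hk, hm k, abs_of_mem_cube hy k]
  suffices ∀ A : Finset (Fin n),
      ∑ i, |∑ y ∈ cube n, p y * mlext (g i) (A.piecewise m y) - ∑ y ∈ cube n, p y * g i y| ≤
        K * ∑ j ∈ A, ∑ y ∈ cube n, p y * |tanh (dd (hamOf p) j y) - m j| by
    simpa [← Finset.sum_mul, hp1] using this Finset.univ
  intro A
  induction A using Finset.induction_on with
  | empty =>
    refine ((Finset.sum_eq_zero fun i _ => ?_).trans (by simp)).le
    rw [Finset.sum_congr rfl fun y hy => by rw [Finset.piecewise_empty, mlext_of_mem_cube _ hy],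
      sub_self, abs_zero]
  | @insert j A hj ih =>
    rw [Finset.sum_insert hj, mul_add]
    refine (Finset.sum_le_sum fun i _ => abs_sub_le _
      (∑ y ∈ cube n, p y * mlext (g i) (A.piecewise m y)) _).trans ?_
    rw [Finset.sum_add_distrib]
    refine add_le_add ?_ ih
    simp only [sum_mul_mlext_piecewise_insert_sub hp _ m hj]
    calc ∑ i, |∑ y ∈ cube n,
            p y * ((m j - tanh (dd (hamOf p) j y)) * dd (mlext (g i)) j (A.piecewise m y))|
        ≤ ∑ i, ∑ y ∈ cube n, p y * |tanh (dd (hamOf p) j y) - m j| *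
            |dd (mlext (g i)) j (A.piecewise m y)| :=
          Finset.sum_le_sum fun i _ => (Finset.abs_sum_le_sum_abs _ _).trans_eq <|
            Finset.sum_congr rfl fun y hy => by
              rw [abs_mul, abs_mul, abs_of_pos (hp y hy), abs_sub_comm, mul_assoc]
      _ = ∑ y ∈ cube n, p y * |tanh (dd (hamOf p) j y) - m j| *
            ∑ i, |dd (mlext (g i)) j (A.piecewise m y)| := by
          rw [Finset.sum_comm]
          simp only [Finset.mul_sum]
      _ ≤ ∑ y ∈ cube n, p y * |tanh (dd (hamOf p) j y) - m j| * K :=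
          Finset.sum_le_sum fun y hy => mul_le_mul_of_nonneg_left (hK j _ (hbox A y hy))
            (mul_nonneg (hp y hy).le (abs_nonneg _))
      _ = K * ∑ y ∈ cube n, p y * |tanh (dd (hamOf p) j y) - m j| := by
          rw [← Finset.sum_mul, mul_comm]

end Interpolation

section Constants

variable {n : ℕ} (f : (Fin n → ℝ) → ℝ)

lemma lip_nonneg : 0 ≤ lip f :=
  Real.sSup_nonneg fun _ ⟨_, _, _, ha⟩ => ha ▸ abs_nonneg _

lemma gradLip_nonneg : 0 ≤ gradLip f :=
  Real.sSup_nonneg fun _ ⟨_, _, _, _, _, ha⟩ => ha ▸ div_nonneg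
    (Finset.sum_nonneg fun _ _ => abs_nonneg _) (Finset.sum_nonneg fun _ _ => abs_nonneg _)

lemma abs_dd_le_lip {y : Fin n → ℝ} (hy : y ∈ cube n) (i : Fin n) : |dd f i y| ≤ lip f := by
  refine le_csSup ((((Finset.univ ×ˢ cube n).finite_toSet.image
    fun q : Fin n × (Fin n → ℝ) => |dd f q.1 q.2|).subset ?_).bddAbove) ⟨i, y, hy, rfl⟩
  rintro _ ⟨i, y, hy, rfl⟩
  exact ⟨(i, y), by simpa using hy, rfl⟩

lemma sum_abs_dd_dd_le_gradLip (j : Fin n) {y : Fin n → ℝ} (hy : y ∈ cube n) :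
    ∑ i, |dd (dd f i) j y| ≤ gradLip f := by
  set yp := Function.update y j 1
  set ym := Function.update y j (-1)
  have hyp : yp ∈ cube n := update_mem_cube hy j (Or.inr rfl)
  have hym : ym ∈ cube n := update_mem_cube hy j (Or.inl rfl)
  have hne : yp ≠ ym := fun h => absurd (congrFun h j) (by norm_num [yp, ym])
  have hdist : onorm (yp - ym) = 2 := by
    rw [onorm, Finset.sum_eq_single j (fun k _ hk => by simp [yp, ym, hk]) (by simp)]
    norm_num [yp, ym]
  have hratio : ∑ i, |dd (dd f i) j y| = onorm (dgrad f yp - dgrad f ym) / onorm (yp - ym) := by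
    rw [hdist, onorm, Finset.sum_div]
    refine Finset.sum_congr rfl fun i _ => ?_
    rw [show dd (dd f i) j y = (dd f i yp - dd f i ym) / 2 from rfl, abs_div, abs_two]
    rfl
  rw [hratio]
  refine le_csSup ((((cube n ×ˢ cube n).finite_toSet.image
    fun q : (Fin n → ℝ) × (Fin n → ℝ) => onorm (dgrad f q.1 - dgrad f q.2) / onorm (q.1 - q.2)
    ).subset ?_).bddAbove) ⟨yp, hyp, ym, hym, hne, rfl⟩
  rintro _ ⟨x, hx, z, hz, -, rfl⟩
  exact ⟨(x, z), by simpa using ⟨hx, hz⟩, rfl⟩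

lemma sum_abs_dd_mlext_dd_le_gradLip (j : Fin n) {z : Fin n → ℝ} (hz : ∀ k, |z k| ≤ 1) :
    ∑ i, |dd (mlext (dd f i)) j z| ≤ gradLip f :=
  IsMultiaffine.sum_abs_le (fun i => (isMultiaffine_mlext _).dd j)
    (fun y hy => by simpa only [dd_mlext_of_mem_cube _ j hy] using sum_abs_dd_dd_le_gradLip f j hy)
    hz

lemma gradComplexity_nonneg : 0 ≤ gradComplexity f := by
  refine integral_nonneg fun θ => le_csSup ?_ ⟨0, Or.inr rfl, by simp⟩
  exact (((cube n).finite_toSet.image _).union (Set.finite_singleton _)).image _ |>.bddAbove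

end Constants

section Estimates

lemma sum_le_sqrt_card_mul_sum_sq {n : ℕ} (a : Fin n → ℝ) : ∑ i, a i ≤ √(n * ∑ i, a i ^ 2) :=
  Real.le_sqrt_of_sq_le (by simpa using sq_sum_le_card_mul_sum_sq (s := Finset.univ) (f := a))

lemma onorm_le_of_tnorm_le {n : ℕ} {v : Fin n → ℝ} {ε : ℝ} (h : tnorm v ≤ ε * √n) :
    onorm v ≤ ε * n := by
  calc onorm v ≤ √(n * ∑ i, |v i| ^ 2) := sum_le_sqrt_card_mul_sum_sq _
    _ = √n * tnorm v := by simp only [sq_abs, tnorm, Real.sqrt_mul (Nat.cast_nonneg n)]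
    _ ≤ √n * (ε * √n) := mul_le_mul_of_nonneg_left h (Real.sqrt_nonneg _)
    _ = ε * n := by rw [mul_left_comm, Real.mul_self_sqrt (Nat.cast_nonneg n)]

lemma sq_sum_mul_abs_sub_le {α : Type*} {s : Finset α} {q : α → ℝ} (hq0 : ∀ y ∈ s, 0 ≤ q y)
    (hq1 : ∑ y ∈ s, q y = 1) (X : α → ℝ) :
    (∑ y ∈ s, q y * |X y - ∑ x ∈ s, q x * X x|) ^ 2 ≤
      ∑ y ∈ s, q y * X y ^ 2 - (∑ y ∈ s, q y * X y) ^ 2 := by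
  set μ := ∑ x ∈ s, q x * X x
  have hcs := Finset.sum_sq_le_sum_mul_sum_of_sq_le_mul s (r := fun y => q y * |X y - μ|)
    (g := fun y => q y * (X y - μ) ^ 2) hq0 (fun y hy => mul_nonneg (hq0 y hy) (sq_nonneg _))
    fun y _ => by rw [mul_pow, sq_abs]; nlinarith
  have hvar : ∑ y ∈ s, q y * (X y - μ) ^ 2 = ∑ y ∈ s, q y * X y ^ 2 - μ ^ 2 := by
    calc ∑ y ∈ s, q y * (X y - μ) ^ 2
          = ∑ y ∈ s, (q y * X y ^ 2 - 2 * μ * (q y * X y) + μ ^ 2 * q y) :=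
          Finset.sum_congr rfl fun y _ => by ring
      _ = _ := by
        rw [Finset.sum_add_distrib, Finset.sum_sub_distrib, ← Finset.mul_sum, ← Finset.mul_sum, hq1]
        ring
  rwa [hq1, one_mul, hvar] at hcs

lemma sqrt_mul_le_of_le_rpow {a D ε T : ℝ} (ha : 0 ≤ a) (hD : 0 ≤ D) (hε : 0 ≤ ε)
    (hT : T ≤ 256 * a ^ ((1 : ℝ) / 3) * D ^ ((2 : ℝ) / 3) / ε ^ ((2 : ℝ) / 3)) :
    √(a * T) ≤ 16 * (a ^ ((2 : ℝ) / 3) * D ^ ((1 : ℝ) / 3) / ε ^ ((1 : ℝ) / 3)) := by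
  have hsq : ∀ x : ℝ, 0 ≤ x → ∀ r : ℝ, (x ^ r) ^ 2 = x ^ (r * 2) := fun x hx r => by
    rw [Real.rpow_mul hx, Real.rpow_two]
  rw [Real.sqrt_le_iff]
  refine ⟨by positivity, (mul_le_mul_of_nonneg_left hT ha).trans_eq ?_⟩
  rw [mul_pow, div_pow, mul_pow, hsq a ha, hsq D hD, hsq ε hε,
    show (2 : ℝ) / 3 * 2 = 1 + 1 / 3 by norm_num, Real.rpow_add' ha (by norm_num), Real.rpow_one]
  norm_num
  ring

end Estimates

section MeanField

variable {n : ℕ}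

/-- The center of mass `∫ tanh (∇ f_p) dp` of the product measure attached to `p`. -/
def tanhMean (p : (Fin n → ℝ) → ℝ) : Fin n → ℝ :=
  fun i => ∑ y ∈ cube n, p y * tanh (dd (hamOf p) i y)

lemma abs_tanhMean_le_one {p : (Fin n → ℝ) → ℝ} (hp0 : ∀ y ∈ cube n, 0 ≤ p y)
    (hp1 : ∑ y ∈ cube n, p y = 1) (i : Fin n) : |tanhMean p i| ≤ 1 :=
  (Finset.abs_sum_le_sum_abs _ _).trans <| (Finset.sum_le_sum fun y hy => by
    rw [abs_mul, abs_of_nonneg (hp0 y hy)]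
    exact mul_le_of_le_one_right (hp0 y hy) (abs_tanh_lt_one _).le).trans_eq hp1

lemma sum_sum_mul_abs_sub_tanhMean_le {p : (Fin n → ℝ) → ℝ} (hp0 : ∀ y ∈ cube n, 0 ≤ p y)
    (hp1 : ∑ y ∈ cube n, p y = 1) :
    ∑ j, ∑ y ∈ cube n, p y * |tanh (dd (hamOf p) j y) - tanhMean p j| ≤ √(n * traceH p) :=
  (sum_le_sqrt_card_mul_sum_sq _).trans <| Real.sqrt_le_sqrt <| mul_le_mul_of_nonneg_left
    (Finset.sum_le_sum fun _ _ => sq_sum_mul_abs_sub_le hp0 hp1 _) (Nat.cast_nonneg n)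

lemma abs_tanh_mlgrad_sub_tanhMean_le (f : (Fin n → ℝ) → ℝ) {θ : Fin n → ℝ}
    (hθ : ∀ i, |θ i| ≤ 1 / 4) (m : Fin n → ℝ) (i : Fin n) :
    |tanh (mlgrad f m i) - tanhMean (tilt (gibbs f) θ) i| ≤
      |mlext (dd f i) m - ∑ y ∈ cube n, tilt (gibbs f) θ y * dd f i y| + |θ i| +
        (2 * lip f + 5 / 2) * ∑ y ∈ cube n, tilt (gibbs f) θ y *
          |tanh (dd (hamOf (tilt (gibbs f) θ)) i y) - tanhMean (tilt (gibbs f) θ) i| := by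
  set p := tilt (gibbs f) θ
  have hp1 : ∑ y ∈ cube n, p y = 1 := sum_tilt_gibbs f θ
  have hZ : ∀ y ∈ cube n, |dd (hamOf p) i y| ≤ lip f + 1 / 4 := fun y hy => by
    rw [dd_hamOf_tilt_gibbs f θ hy]
    exact (abs_add_le _ _).trans (add_le_add (abs_dd_le_lip f hy i) (hθ i))
  have hgap := abs_tanh_sum_mul_sub_sum_mul_tanh_le
    (fun y hy => (tilt_gibbs_pos f θ hy).le) hp1 hZ
  have hmean : ∑ y ∈ cube n, p y * dd (hamOf p) i y = ∑ y ∈ cube n, p y * dd f i y + θ i := by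
    rw [Finset.sum_congr rfl fun y hy => by rw [dd_hamOf_tilt_gibbs f θ hy, mul_add],
      Finset.sum_add_distrib, ← Finset.sum_mul, hp1, one_mul]
  calc |tanh (mlgrad f m i) - tanhMean p i|
      ≤ |tanh (mlgrad f m i) - tanh (∑ y ∈ cube n, p y * dd (hamOf p) i y)| +
          |tanh (∑ y ∈ cube n, p y * dd (hamOf p) i y) - tanhMean p i| := abs_sub_le _ _ _
    _ ≤ |mlext (dd f i) m - (∑ y ∈ cube n, p y * dd f i y + θ i)| +
          (2 * (lip f + 1 / 4) + 2) * ∑ y ∈ cube n, p y *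
            |tanh (dd (hamOf p) i y) - tanhMean p i| := by
        rw [← hmean]
        exact add_le_add (abs_tanh_sub_tanh_le _ _) hgap
    _ ≤ _ := by
        rw [← sub_sub]
        linarith [abs_sub (mlext (dd f i) m - ∑ y ∈ cube n, p y * dd f i y) (θ i)]

lemma onorm_tanh_mlgrad_tanhMean_sub_le (f : (Fin n → ℝ) → ℝ) (θ : Fin n → ℝ)
    (hθ : ∀ i, |θ i| ≤ 1 / 4) :
    onorm (fun i => tanh (mlgrad f (tanhMean (tilt (gibbs f) θ)) i) -
        tanhMean (tilt (gibbs f) θ) i) ≤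
      (gradLip f + 2 * lip f + 5 / 2) * ∑ j, ∑ y ∈ cube n, tilt (gibbs f) θ y *
        |tanh (dd (hamOf (tilt (gibbs f) θ)) j y) - tanhMean (tilt (gibbs f) θ) j| + onorm θ := by
  set p := tilt (gibbs f) θ
  set m := tanhMean p
  set W := fun j => ∑ y ∈ cube n, p y * |tanh (dd (hamOf p) j y) - m j|
  have hp : ∀ y ∈ cube n, 0 < p y := fun y hy => tilt_gibbs_pos f θ hy
  have hp1 : ∑ y ∈ cube n, p y = 1 := sum_tilt_gibbs f θ
  calc onorm (fun i => tanh (mlgrad f m i) - m i)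
      ≤ ∑ i, (|mlext (dd f i) m - ∑ y ∈ cube n, p y * dd f i y| + |θ i| +
          (2 * lip f + 5 / 2) * W i) :=
        Finset.sum_le_sum fun i _ => abs_tanh_mlgrad_sub_tanhMean_le f hθ m i
    _ = ∑ i, |mlext (dd f i) m - ∑ y ∈ cube n, p y * dd f i y| + onorm θ +
          (2 * lip f + 5 / 2) * ∑ j, W j := by
        rw [Finset.sum_add_distrib, Finset.sum_add_distrib, Finset.mul_sum, onorm]
    _ ≤ gradLip f * ∑ j, W j + onorm θ + (2 * lip f + 5 / 2) * ∑ j, W j := by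
        gcongr
        exact sum_abs_mlext_sub_sum_mul_le hp hp1
          (fun j z hz => sum_abs_dd_mlext_dd_le_gradLip f j hz)
          (abs_tanhMean_le_one (fun y hy => (hp y hy).le) hp1)
    _ = _ := by ring

end MeanField

/-- Proposition `main_proposition` of the paper.
Let `ν` be the Gibbs distribution with Hamiltonian `f` and let `θ` be a tilt with
`‖θ‖₂ ≤ ε√n`, `‖θ‖_∞ ≤ 1/4` and small `Tr(H(τ_θν))`. If `Y ∼ ξ_θ`, the product
measure centered at `∫ tanh(∇f_{τ_θν}(y)) dτ_θν(y)`, then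
`‖tanh(∇f(E Y)) - E Y‖₁ ≤ 41 L₁ (112 L₂ n^{2/3} D^{1/3} / ε^{1/3} + ε n)`. -/
theorem main_proposition (n : ℕ) (f : (Fin n → ℝ) → ℝ)
    (D L₁ L₂ ε : ℝ)
    (hD : D = gradComplexity f)
    (hL₁ : L₁ = max 1 (lip f))
    (hL₂ : L₂ = max 1 (gradLip f))
    (hε : 0 < ε)
    (θ : Fin n → ℝ)
    (hθ2 : tnorm θ ≤ ε * Real.sqrt n)
    (hθinf : ∀ i, |θ i| ≤ 1 / 4)
    (hH : traceH (tilt (gibbs f) θ) ≤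
      256 * (n : ℝ) ^ ((1 : ℝ) / 3) * D ^ ((2 : ℝ) / 3) / ε ^ ((2 : ℝ) / 3))
    (EY : Fin n → ℝ)
    (hEY : EY = fun i => ∑ y ∈ cube n,
      tilt (gibbs f) θ y * Real.tanh (dd (hamOf (tilt (gibbs f) θ)) i y)) :
    onorm (fun i => Real.tanh (mlgrad f EY i) - EY i) ≤
      41 * L₁ * (112 * L₂ * (n : ℝ) ^ ((2 : ℝ) / 3) * D ^ ((1 : ℝ) / 3) / ε ^ ((1 : ℝ) / 3)
        + ε * n) := by
  obtain rfl : EY = tanhMean (tilt (gibbs f) θ) := hEY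
  have hD0 : 0 ≤ D := hD ▸ gradComplexity_nonneg f
  have hS := (sum_sum_mul_abs_sub_tanhMean_le (fun y hy => (tilt_gibbs_pos f θ hy).le)
    (sum_tilt_gibbs f θ)).trans (sqrt_mul_le_of_le_rpow (Nat.cast_nonneg n) hD0 hε.le hH)
  have hbound := (onorm_tanh_mlgrad_tanhMean_sub_le f θ hθinf).trans <| add_le_add
    (mul_le_mul_of_nonneg_left hS (by linarith [gradLip_nonneg f, lip_nonneg f]))
    (onorm_le_of_tnorm_le hθ2)
  set Q := (n : ℝ) ^ ((2 : ℝ) / 3) * D ^ ((1 : ℝ) / 3) / ε ^ ((1 : ℝ) / 3)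
  have hQ0 : 0 ≤ Q := div_nonneg (mul_nonneg (Real.rpow_nonneg (Nat.cast_nonneg n) _)
    (Real.rpow_nonneg hD0 _)) (Real.rpow_nonneg hε.le _)
  have hL₁1 : 1 ≤ L₁ := hL₁ ▸ le_max_left _ _
  have hL₂1 : 1 ≤ L₂ := hL₂ ▸ le_max_left _ _
  have hcoef : gradLip f + 2 * lip f + 5 / 2 ≤ 11 / 2 * L₁ * L₂ := by
    have := hL₁ ▸ le_max_right 1 (lip f)
    have := hL₂ ▸ le_max_right 1 (gradLip f)
    nlinarith
  rw [show 112 * L₂ * (n : ℝ) ^ ((2 : ℝ) / 3) * D ^ ((1 : ℝ) / 3) / ε ^ ((1 : ℝ) / 3) =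
    112 * L₂ * Q by ring]
  nlinarith [mul_le_mul_of_nonneg_right hcoef (by positivity : (0 : ℝ) ≤ 16 * Q),
    mul_nonneg (mul_nonneg (by linarith : (0 : ℝ) ≤ L₁) (by linarith : (0 : ℝ) ≤ L₂)) hQ0,
    mul_nonneg (sub_nonneg.2 hL₁1) (by positivity : (0 : ℝ) ≤ ε * n)]

end Paper
end
end

section
/- Let L ≥ 1 and let Z be a real-valued random variable with |Z| ≤ L almost surely. Then |tanh(E Z) − E tanh(Z)| ≤ 20 L · E|tanh(Z) − E tanh(Z)|. -/
/-! Put `b = E tanh Z` and `c = artanh b`, so that `tanh c = b`. Since `Z = artanh (tanh Z)` and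
`artanh u = (log (1 + u) - log (1 - u)) / 2`, the tangent-line bound for `log (1 + ·)` at `b` and a
two-case estimate of `log (1 - b) - log (1 - u)` (using `1 - u ≥ e^{-2L}` for `|u| ≤ tanh L`) give
`artanh u - c ≤ (u - b) / (1 + b) / 2 + 3L |u - b| / (1 - b)`; the linear term has mean zero, so
`E Z - c ≤ 3L E|tanh Z - b| / (1 - b)`. As `1 - tanh` decays no faster than `e^{-2x}`, we have
`tanh (E Z) - tanh c ≤ 2 (1 - b) (E Z - c)⁺`, which is at most `6L E|tanh Z - b|`. Applying this
to `-Z` bounds the other side. -/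

open MeasureTheory

noncomputable section

namespace Paper

open Real

lemma continuous_tanh : Continuous tanh := by
  simp_rw [funext tanh_eq_sinh_div_cosh]
  exact continuous_sinh.div continuous_cosh fun x => (cosh_pos x).ne'

lemma strictMono_tanh : StrictMono tanh := fun x y hxy => by
  by_contra! hle
  have := artanh_le_artanh (neg_one_lt_tanh y) (tanh_lt_one x) hle
  rw [artanh_tanh, artanh_tanh] at this
  linarith

lemma abs_tanh_le_tanh {x L : ℝ} (h : |x| ≤ L) : |tanh x| ≤ tanh L := by
  rw [abs_le] at h ⊢
  rw [← tanh_neg]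
  exact ⟨strictMono_tanh.monotone h.1, strictMono_tanh.monotone h.2⟩

lemma one_sub_tanh_eq (x : ℝ) : 1 - tanh x = 2 / (exp (2 * x) + 1) := by
  rw [tanh_eq, exp_neg, two_mul, exp_add]
  field_simp
  ring

lemma one_sub_tanh_mul_exp_le {a c : ℝ} (h : c ≤ a) :
    (1 - tanh c) * exp (-(2 * (a - c))) ≤ 1 - tanh a := by
  have hexp : exp (-(2 * (a - c))) = exp (2 * c) / exp (2 * a) := by
    rw [← exp_sub]; ring_nf
  have hca : exp (2 * c) ≤ exp (2 * a) := exp_le_exp.2 (by linarith)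
  have hc := exp_pos (2 * c)
  rw [one_sub_tanh_eq, one_sub_tanh_eq, hexp, div_mul_div_comm,
    div_le_div_iff₀ (by positivity) (by positivity)]
  nlinarith

lemma tanh_sub_tanh_le {a c s : ℝ} (hs : 0 ≤ s) (h : a - c ≤ s) :
    tanh a - tanh c ≤ 2 * (1 - tanh c) * s := by
  have hc : 0 < 1 - tanh c := sub_pos.2 (tanh_lt_one c)
  rcases le_total a c with hac | hca
  · have := strictMono_tanh.monotone hac
    nlinarith
  · have hdecay := one_sub_tanh_mul_exp_le hca
    have hlin := add_one_le_exp (-(2 * (a - c)))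
    nlinarith

lemma log_le_log_add_sub_div {x y : ℝ} (hx : 0 < x) (hy : 0 < y) :
    log x ≤ log y + (x - y) / y := by
  have := log_le_sub_one_of_pos (div_pos hx hy)
  rw [log_div hx.ne' hy.ne'] at this
  rw [sub_div, div_self hy.ne']
  linarith

lemma log_sub_log_le {x y L : ℝ} (hL : 1 ≤ L) (hx : 0 < x) (hx2 : x ≤ 2)
    (hy : exp (-(2 * L)) ≤ y) : log x - log y ≤ 6 * L * |x - y| / x := by
  have hy0 : 0 < y := (exp_pos _).trans_le hy
  rcases le_or_gt x (2 * y) with hnear | hfar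
  · calc log x - log y ≤ (x - y) / y := by linarith [log_le_log_add_sub_div hx hy0]
      _ ≤ 2 * |x - y| / x := by
        rw [div_le_div_iff₀ hy0 hx]
        nlinarith [le_abs_self (x - y), abs_nonneg (x - y)]
      _ ≤ 6 * L * |x - y| / x := by gcongr; linarith
  · have hlogx : log x ≤ 1 := by linarith [log_le_sub_one_of_pos hx]
    have hlogy : -(2 * L) ≤ log y := by
      simpa only [log_exp] using log_le_log (exp_pos _) hy
    have hgap : x / 2 ≤ |x - y| := by
      rw [abs_of_pos (by linarith)]; linarith
    calc log x - log y ≤ 6 * L * (x / 2) / x := by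
          rw [show 6 * L * (x / 2) / x = 3 * L by field_simp; ring]; linarith
      _ ≤ 6 * L * |x - y| / x := by gcongr

lemma exp_neg_two_mul_le_one_sub_tanh {x : ℝ} (hx : 0 ≤ x) : exp (-(2 * x)) ≤ 1 - tanh x := by
  simpa using one_sub_tanh_mul_exp_le hx

lemma artanh_sub_artanh_le {L u v : ℝ} (hL : 1 ≤ L) (hu : |u| ≤ tanh L) (hv : |v| ≤ tanh L) :
    artanh u - artanh v ≤ (u - v) / (1 + v) / 2 + 3 * L * |u - v| / (1 - v) := by
  have ht := tanh_lt_one L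
  rw [abs_le] at hu hv
  have hu1 : 0 < 1 + u := by linarith
  have hu2 : 0 < 1 - u := by linarith
  have hv1 : 0 < 1 + v := by linarith
  have hv2 : 0 < 1 - v := by linarith
  have hplus := log_le_log_add_sub_div hu1 hv1
  have hminus : log (1 - v) - log (1 - u) ≤ 6 * L * |(1 - v) - (1 - u)| / (1 - v) :=
    log_sub_log_le hL hv2 (by linarith) <|
      (exp_neg_two_mul_le_one_sub_tanh (by linarith)).trans (by linarith)
  rw [artanh_eq_half_log ⟨by linarith, by linarith⟩, artanh_eq_half_log ⟨by linarith, by linarith⟩,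
    log_div hu1.ne' hu2.ne', log_div hv1.ne' hv2.ne']
  rw [show (1 - v) - (1 - u) = u - v by ring] at hminus
  rw [show 1 + u - (1 + v) = u - v by ring] at hplus
  have hhalf : 3 * L * |u - v| / (1 - v) = 6 * L * |u - v| / (1 - v) / 2 := by ring
  linarith

lemma tanh_integral_sub_integral_tanh_le {Ω : Type*} [MeasurableSpace Ω] (P : Measure Ω)
    [IsProbabilityMeasure P] {Z : Ω → ℝ} (hZ : AEStronglyMeasurable Z P) {L : ℝ} (hL : 1 ≤ L)
    (hbdd : ∀ᵐ ω ∂P, |Z ω| ≤ L) :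
    tanh (∫ ω, Z ω ∂P) - ∫ ω, tanh (Z ω) ∂P ≤
      6 * L * ∫ ω, |tanh (Z ω) - ∫ ω', tanh (Z ω') ∂P| ∂P := by
  set b := ∫ ω, tanh (Z ω) ∂P
  set D := ∫ ω, |tanh (Z ω) - b| ∂P
  have hTbdd : ∀ᵐ ω ∂P, |tanh (Z ω)| ≤ tanh L := hbdd.mono fun _ => abs_tanh_le_tanh
  have hZint : Integrable Z P := .of_bound hZ L hbdd
  have hTint : Integrable (fun ω => tanh (Z ω)) P :=
    .of_bound (continuous_tanh.comp_aestronglyMeasurable hZ) _ hTbdd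
  have hb : |b| ≤ tanh L := by
    simpa using norm_integral_le_of_norm_le_const (μ := P) (f := fun ω => tanh (Z ω))
      (by simpa only [Real.norm_eq_abs] using hTbdd)
  have hb1 : 0 < 1 - b := by linarith [le_abs_self b, tanh_lt_one L]
  have hb2 : 0 < 1 + b := by linarith [neg_abs_le b, tanh_lt_one L]
  have hpoint : ∀ᵐ ω ∂P, Z ω - artanh b ≤
      (tanh (Z ω) - b) / (1 + b) / 2 + 3 * L * |tanh (Z ω) - b| / (1 - b) := by
    filter_upwards [hTbdd] with ω hω
    simpa only [artanh_tanh] using artanh_sub_artanh_le hL hω hb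
  have hcentered : ∫ ω, tanh (Z ω) - b ∂P = 0 := by
    rw [integral_sub hTint (integrable_const b), integral_const, probReal_univ, one_smul, sub_self]
  have hmean : ∫ ω, Z ω ∂P - artanh b ≤ 3 * L * D / (1 - b) := by
    have hTc : Integrable (fun ω => tanh (Z ω) - b) P := hTint.sub (integrable_const b)
    calc ∫ ω, Z ω ∂P - artanh b = ∫ ω, Z ω - artanh b ∂P := by
          rw [integral_sub hZint (integrable_const _), integral_const, probReal_univ, one_smul]
      _ ≤ ∫ ω, (tanh (Z ω) - b) / (1 + b) / 2 + 3 * L * |tanh (Z ω) - b| / (1 - b) ∂P :=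
          integral_mono_ae (hZint.sub (integrable_const _))
            (((hTc.div_const _).div_const _).add ((hTc.abs.const_mul _).div_const _)) hpoint
      _ = 3 * L * D / (1 - b) := by
          rw [integral_add ((hTc.div_const _).div_const _) ((hTc.abs.const_mul _).div_const _),
            integral_div, integral_div, hcentered, integral_div, integral_const_mul]
          ring
  have htanh_b : tanh (artanh b) = b :=
    tanh_artanh ⟨by linarith, by linarith⟩
  calc tanh (∫ ω, Z ω ∂P) - b = tanh (∫ ω, Z ω ∂P) - tanh (artanh b) := by rw [htanh_b]
    _ ≤ 2 * (1 - b) * (3 * L * D / (1 - b)) := by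
        simpa only [htanh_b] using tanh_sub_tanh_le (by positivity) hmean
    _ = 6 * L * D := by field_simp; ring

/-- Lemma on the variance of `tanh`.
If `Z` is a random variable with `|Z| ≤ L` almost surely (`L ≥ 1`), then
`|tanh(E Z) - E tanh(Z)| ≤ 20 L · E|tanh(Z) - E tanh(Z)|`. -/
theorem variance_of_tanh {Ω : Type*} [MeasurableSpace Ω]
    (P : Measure Ω) [IsProbabilityMeasure P]
    (Z : Ω → ℝ) (hZmeas : AEStronglyMeasurable Z P)
    (L : ℝ) (hL : 1 ≤ L) (hbdd : ∀ᵐ ω ∂P, |Z ω| ≤ L) :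
    |Real.tanh (∫ ω, Z ω ∂P) - ∫ ω, Real.tanh (Z ω) ∂P| ≤
      20 * L * ∫ ω, |Real.tanh (Z ω) - ∫ ω', Real.tanh (Z ω') ∂P| ∂P := by
  have hD : 0 ≤ ∫ ω, |tanh (Z ω) - ∫ ω', tanh (Z ω') ∂P| ∂P :=
    integral_nonneg fun _ => abs_nonneg _
  have hupper := tanh_integral_sub_integral_tanh_le P hZmeas hL hbdd
  have hlower := tanh_integral_sub_integral_tanh_le P hZmeas.neg hL (by simpa using hbdd)
  simp only [Pi.neg_apply, tanh_neg, integral_neg, neg_sub_neg,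
    abs_sub_comm (∫ ω, tanh (Z ω) ∂P)] at hlower
  rw [abs_sub_le_iff]
  constructor <;> nlinarith

end Paper
end
end

section
/- Let t ∈ ℝ, δ > 0, and f : C_n → ℝ. Define h₀ : ℝ → ℝ by h₀(x) = 2x+1 for x ≤ −1, h₀(x) = −x² for −1 ≤ x ≤ 0, and h₀(x) = 0 for x ≥ 0; set ψ(x) = n·h₀((x/n − t)/δ), g = ψ∘f, and let ν be the Gibbs distribution with Hamiltonian g. Set δ' = ((log 4 + 1)/2)·δ and B = {y ∈ C_n : f(y) ≤ (t − δ')n}. If there exists z ∈ C_n with f(z) ≥ tn, then ν(B) ≤ 2^{−n}. -/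
open MeasureTheory

noncomputable section

namespace Paper

/-- Proposition `small_tail` of the paper.
For the smoothed-cutoff Hamiltonian `g = ψ ∘ f` and `δ' = ((log 4 + 1)/2)δ`, if some
`z ∈ C_n` has `f(z) ≥ tn`, then the Gibbs measure of
`B = {y : f(y) ≤ (t - δ')n}` is at most `2^{-n}`. -/
theorem small_tail (n : ℕ) (t δ : ℝ) (hδ : 0 < δ)
    (f : (Fin n → ℝ) → ℝ)
    (h₀ ψ : ℝ → ℝ) (g : (Fin n → ℝ) → ℝ)
    (hh₀ : h₀ = fun x => if x ≤ -1 then 2 * x + 1 else if x ≤ 0 then -x ^ 2 else 0)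
    (hψ : ψ = fun x => n * h₀ ((x / n - t) / δ))
    (hg : g = ψ ∘ f)
    (δ' : ℝ) (hδ' : δ' = (Real.log 4 + 1) / 2 * δ)
    (hz : ∃ z ∈ cube n, t * n ≤ f z) :
    ∑ y ∈ cube n, (if f y ≤ (t - δ') * n then gibbs g y else 0) ≤ ((2 : ℝ) ^ n)⁻¹ := by
  subst hg hψ hh₀ hδ'
  obtain ⟨z, hzc, hzf⟩ := hz
  have hlog4 : (1:ℝ) ≤ Real.log 4 := by
    rw [Real.le_log_iff_exp_le (by norm_num : (0:ℝ) < 4)]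
    linarith [Real.exp_one_lt_d9]
  set h₀ : ℝ → ℝ := fun x => if x ≤ -1 then 2 * x + 1 else if x ≤ 0 then -x ^ 2 else 0
    with hh₀
  set g : (Fin n → ℝ) → ℝ := (fun x => (n:ℝ) * h₀ ((x / n - t) / δ)) ∘ f with hg
  set Z := ∑ w ∈ cube n, Real.exp (g w) with hZ
  have hgz : g z = 0 := by
    rw [hg]
    simp only [Function.comp_apply, hh₀]
    rcases Nat.eq_zero_or_pos n with hn | hn
    · subst hn; simp
    · have hn' : (0:ℝ) < n := by exact_mod_cast hn
      have hu : (0:ℝ) ≤ (f z / n - t) / δ := by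
        apply div_nonneg _ hδ.le
        have : t ≤ f z / n := by
          rw [le_div_iff₀ hn']; linarith
        linarith
      have h1 : ¬((f z / n - t) / δ ≤ -1) := by linarith
      rw [if_neg h1]
      by_cases h2 : (f z / n - t) / δ ≤ 0
      · have he : (f z / n - t) / δ = 0 := le_antisymm h2 hu
        rw [if_pos h2, he]; ring
      · rw [if_neg h2]; ring
  have hZ1 : (1:ℝ) ≤ Z := by
    have h1 : Real.exp (g z) = 1 := by rw [hgz, Real.exp_zero]
    calc (1:ℝ) = Real.exp (g z) := h1.symm
    _ ≤ Z := Finset.single_le_sum (fun w _ => (Real.exp_pos _).le) hzc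
  have hbound : ∀ y ∈ cube n,
      (if f y ≤ (t - (Real.log 4 + 1) / 2 * δ) * n then gibbs g y else 0) ≤ ((4:ℝ)^n)⁻¹ := by
    intro y hy
    split_ifs with hf
    · have hgy : g y ≤ -(n * Real.log 4) := by
        rw [hg]
        simp only [Function.comp_apply, hh₀]
        rcases Nat.eq_zero_or_pos n with hn | hn
        · subst hn; simp
        · have hn' : (0:ℝ) < n := by exact_mod_cast hn
          have hu : (f y / n - t) / δ ≤ -((Real.log 4 + 1) / 2) := by
            rw [div_le_iff₀ hδ]
            have : f y / n ≤ t - (Real.log 4 + 1) / 2 * δ := by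
              rw [div_le_iff₀ hn']; linarith
            linarith
          have h1 : (f y / n - t) / δ ≤ -1 := by linarith
          rw [if_pos h1]
          have h2 : 2 * ((f y / n - t) / δ) + 1 ≤ -Real.log 4 := by linarith
          calc (n:ℝ) * (2 * ((f y / n - t) / δ) + 1) ≤ (n:ℝ) * (-Real.log 4) :=
                mul_le_mul_of_nonneg_left h2 hn'.le
          _ = -(n * Real.log 4) := by ring
      have hexp : Real.exp (g y) ≤ ((4:ℝ)^n)⁻¹ := by
        have h1 : Real.exp (g y) ≤ Real.exp (-(n * Real.log 4)) := Real.exp_le_exp.mpr hgy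
        have h2 : Real.exp (-((n:ℝ) * Real.log 4)) = ((4:ℝ)^n)⁻¹ := by
          rw [Real.exp_neg, Real.exp_nat_mul, Real.exp_log (by norm_num : (0:ℝ) < 4)]
        linarith [h1, h2.le]
      have hgibbs : gibbs g y = Real.exp (g y) / Z := by
        rw [gibbs, if_pos hy]
      rw [hgibbs]
      calc Real.exp (g y) / Z ≤ Real.exp (g y) := div_le_self (Real.exp_pos _).le hZ1
      _ ≤ ((4:ℝ)^n)⁻¹ := hexp
    · positivity
  have hcard : (cube n).card = 2 ^ n := by
    have : ({-1, 1} : Finset ℝ).card = 2 := by norm_num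
    simp [cube, Fintype.card_piFinset, this]
  calc ∑ y ∈ cube n, (if f y ≤ (t - (Real.log 4 + 1) / 2 * δ) * n then gibbs g y else 0)
      ≤ ∑ _y ∈ cube n, ((4:ℝ)^n)⁻¹ := Finset.sum_le_sum hbound
  _ = (cube n).card * ((4:ℝ)^n)⁻¹ := by rw [Finset.sum_const, nsmul_eq_mul]
  _ = (2:ℝ)^n * ((4:ℝ)^n)⁻¹ := by rw [hcard]; push_cast; ring
  _ = ((2:ℝ)^n)⁻¹ := by
      have : (4:ℝ)^n = (2:ℝ)^n * (2:ℝ)^n := by rw [← mul_pow]; norm_num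
      rw [this, mul_inv]
      field_simp

end Paper
end
end
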